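/- arXiv:1506.00290 — 2 statements merged into one kernel-verified Lean document; each statement's English description precedes it below -/
import Mathlib

section
/- Entropy of a uniformly random coordinate: let N be a positive integer, let I be a finite index type with |I| = N, let F be a nonempty finite type, and let p be a probability mass function on the function type I → F. Define q : F → ℝ by q(y) = (1/N) · ∑_{j ∈ I} ∑_{z : z(j) = y} p(z), i.e., q is the distribution of z(J) when z is drawn according to p and J is drawn uniformly from I, independently of z. Then q is a pmf on F and its base-2 Shannon entropy satisfies H(q) ≥ H(p)/N. (Step establishing entropy(R'|E) ≥ entropy(Row)/N in the proof of Lemma 3.2.) -/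
open Finset

open scoped Classical in
/-- `p` is a probability mass function on the finite type `Ω`. -/
def IsPMF {Ω : Type*} [Fintype Ω] (p : Ω → ℝ) : Prop :=
  (∀ x, 0 ≤ p x) ∧ ∑ x, p x = 1

open scoped Classical in
/-- Statistical distance between two pmfs on a finite type. -/
noncomputable def SD {Ω : Type*} [Fintype Ω] (p q : Ω → ℝ) : ℝ :=
  (1 / 2) * ∑ x, |p x - q x|

open scoped Classical in
/-- Base-2 Shannon entropy of a pmf on a finite type. -/
noncomputable def H2 {Ω : Type*} [Fintype Ω] (p : Ω → ℝ) : ℝ :=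
  ∑ x, if p x = 0 then 0 else p x * Real.logb 2 (1 / p x)

open scoped Classical in
/-- Base-2 Kullback–Leibler divergence between two pmfs on a finite type. -/
noncomputable def KL2 {Ω : Type*} [Fintype Ω] (p q : Ω → ℝ) : ℝ :=
  ∑ x, if p x = 0 then 0 else p x * Real.logb 2 (p x / q x)

open scoped Classical in
/-- Gibbs' inequality (cross-entropy form). -/
lemma gibbs_aux {Ω : Type*} [Fintype Ω] (p r : Ω → ℝ)
    (hp0 : ∀ x, 0 ≤ p x) (hp1 : ∑ x, p x = 1)
    (hr0 : ∀ x, 0 ≤ r x) (hr1 : ∑ x, r x ≤ 1)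
    (hrp : ∀ x, r x = 0 → p x = 0) :
    ∑ x, p x * Real.logb 2 (1 / p x) ≤ ∑ x, p x * Real.logb 2 (1 / r x) := by
  have hlog2 : (0:ℝ) < Real.log 2 := Real.log_pos (by norm_num)
  have key : ∀ x, p x * Real.logb 2 (1 / p x) - p x * Real.logb 2 (1 / r x)
      ≤ (r x - p x) / Real.log 2 := by
    intro x
    rcases eq_or_lt_of_le (hp0 x) with h0 | hpos
    · rw [← h0]
      simp only [zero_mul, sub_self, sub_zero]
      exact div_nonneg (hr0 x) hlog2.le
    · have hr : 0 < r x := by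
        rcases eq_or_lt_of_le (hr0 x) with h | h
        · exact absurd (hrp x h.symm) (by linarith)
        · exact h
      have heq : p x * Real.logb 2 (1 / p x) - p x * Real.logb 2 (1 / r x)
          = p x * Real.log (r x / p x) / Real.log 2 := by
        rw [one_div, one_div, Real.logb_inv, Real.logb_inv, Real.logb, Real.logb,
          Real.log_div hr.ne' hpos.ne']
        ring
      rw [heq]
      have hb := Real.log_le_sub_one_of_pos (div_pos hr hpos)
      rw [div_le_div_iff_of_pos_right hlog2]
      calc p x * Real.log (r x / p x) ≤ p x * (r x / p x - 1) :=
            mul_le_mul_of_nonneg_left hb (hp0 x)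
        _ = r x - p x := by field_simp
  calc ∑ x, p x * Real.logb 2 (1 / p x)
      = ∑ x, p x * Real.logb 2 (1 / r x)
        + ∑ x, (p x * Real.logb 2 (1 / p x) - p x * Real.logb 2 (1 / r x)) := by
        rw [Finset.sum_sub_distrib]; ring
    _ ≤ ∑ x, p x * Real.logb 2 (1 / r x) + ∑ x, (r x - p x) / Real.log 2 := by
        gcongr with x _; exact key x
    _ ≤ ∑ x, p x * Real.logb 2 (1 / r x) := by
        have h2 : ∑ x, (r x - p x) / Real.log 2 = ((∑ x, r x) - 1) / Real.log 2 := by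
          rw [← Finset.sum_div, Finset.sum_sub_distrib, hp1]
        rw [h2]
        nlinarith [div_nonpos_of_nonpos_of_nonneg
          (by linarith : (∑ x, r x) - 1 ≤ 0) hlog2.le]

open scoped Classical in
lemma H2_eq_aux {Ω : Type*} [Fintype Ω] (p : Ω → ℝ) :
    H2 p = ∑ x, p x * Real.logb 2 (1 / p x) := by
  unfold H2
  refine Finset.sum_congr rfl fun x _ => ?_
  split_ifs with h
  · simp [h]
  · rfl

open scoped Classical in
/-- Entropy of a uniformly random coordinate (step establishing
`entropy(R'|E) ≥ entropy(Row)/N` in the proof of Lemma 3.2): if `q` is the law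
of `z J` where `z ← p` and `J` is uniform on `I` (with `|I| = N`), then `q` is
a pmf and `H2 q ≥ H2 p / N`. -/
theorem entropy_random_coordinate (N : ℕ) (hN : 0 < N)
    (I : Type*) [Fintype I] (hI : Fintype.card I = N)
    (F : Type*) [Fintype F] [Nonempty F]
    (p : (I → F) → ℝ) (hp : IsPMF p)
    (q : F → ℝ)
    (hq : ∀ y, q y = (1 / (N : ℝ)) *
      ∑ j : I, ∑ z ∈ Finset.univ.filter (fun z : I → F => z j = y), p z) :
    IsPMF q ∧ H2 q ≥ H2 p / N := by
  obtain ⟨hp0, hp1⟩ := hp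
  have hNR : (0:ℝ) < (N:ℝ) := by exact_mod_cast hN
  -- q is nonneg
  have hq0 : ∀ y, 0 ≤ q y := by
    intro y
    rw [hq y]
    have : 0 ≤ ∑ j : I, ∑ z ∈ Finset.univ.filter (fun z : I → F => z j = y), p z :=
      Finset.sum_nonneg fun j _ => Finset.sum_nonneg fun z _ => hp0 z
    positivity
  -- fiberwise sum identity
  have hfiber : ∀ j : I,
      ∑ y : F, ∑ z ∈ Finset.univ.filter (fun z : I → F => z j = y), p z = 1 := by
    intro j
    rw [Finset.sum_fiberwise (Finset.univ) (fun z : I → F => z j) p]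
    exact hp1
  -- sum of q is 1
  have hq1 : ∑ y, q y = 1 := by
    have h1 : ∑ y, q y = (1 / (N : ℝ)) *
        ∑ y : F, ∑ j : I, ∑ z ∈ Finset.univ.filter (fun z : I → F => z j = y), p z := by
      rw [Finset.mul_sum]
      exact Finset.sum_congr rfl fun y _ => hq y
    rw [h1, Finset.sum_comm]
    simp only [hfiber]
    simp [hI]
    field_simp
  -- q y = 0 forces p z = 0 on the fiber
  have hqz : ∀ (j : I) (z : I → F), q (z j) = 0 → p z = 0 := by
    intro j z h0
    rw [hq (z j)] at h0
    have hsum : ∑ j' : I, ∑ w ∈ Finset.univ.filter (fun w : I → F => w j' = z j), p w = 0 := by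
      have := mul_eq_zero.mp h0
      rcases this with h | h
      · exact absurd h (by positivity)
      · exact h
    have hinner : ∑ w ∈ Finset.univ.filter (fun w : I → F => w j = z j), p w = 0 := by
      have := (Finset.sum_eq_zero_iff_of_nonneg
        (fun j' _ => Finset.sum_nonneg fun w _ => hp0 w)).mp hsum
      exact this j (Finset.mem_univ j)
    have := (Finset.sum_eq_zero_iff_of_nonneg (fun w _ => hp0 w)).mp hinner
    exact this z (by simp)
  -- the product distribution r
  set r : (I → F) → ℝ := fun z => ∏ j, q (z j) with hr_def
  have hr0 : ∀ z, 0 ≤ r z := fun z => Finset.prod_nonneg fun j _ => hq0 (z j)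
  have hr1 : ∑ z, r z = 1 := by
    rw [hr_def]
    rw [← Fintype.prod_sum (fun (_ : I) (y : F) => q y)]
    simp [hq1]
  have hrp : ∀ z, r z = 0 → p z = 0 := by
    intro z h
    rw [hr_def] at h
    obtain ⟨j, _, hj⟩ := Finset.prod_eq_zero_iff.mp h
    exact hqz j z hj
  -- Gibbs
  have hgibbs := gibbs_aux p r hp0 hp1 hr0 (le_of_eq hr1) hrp
  -- compute the cross entropy
  have hcross : ∑ z, p z * Real.logb 2 (1 / r z) = (N : ℝ) * H2 q := by
    have step1 : ∀ z : I → F,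
        p z * Real.logb 2 (1 / r z) = ∑ j : I, p z * Real.logb 2 (1 / q (z j)) := by
      intro z
      rcases eq_or_ne (p z) 0 with h | h
      · simp [h]
      · have hqne : ∀ j : I, q (z j) ≠ 0 := fun j hj => h (hqz j z hj)
        have : Real.logb 2 (1 / r z) = ∑ j : I, Real.logb 2 (1 / q (z j)) := by
          rw [hr_def]
          simp only [one_div, Real.logb_inv]
          rw [Real.logb_prod _ _ (fun j _ => hqne j), ← Finset.sum_neg_distrib]
        rw [this, Finset.mul_sum]
      -- done
    calc ∑ z, p z * Real.logb 2 (1 / r z)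
        = ∑ z : I → F, ∑ j : I, p z * Real.logb 2 (1 / q (z j)) :=
          Finset.sum_congr rfl fun z _ => step1 z
      _ = ∑ j : I, ∑ z : I → F, p z * Real.logb 2 (1 / q (z j)) := Finset.sum_comm
      _ = ∑ j : I, ∑ y : F,
            (∑ z ∈ Finset.univ.filter (fun z : I → F => z j = y), p z)
              * Real.logb 2 (1 / q y) := by
          refine Finset.sum_congr rfl fun j _ => ?_
          rw [← Finset.sum_fiberwise (Finset.univ) (fun z : I → F => z j)
            (fun z => p z * Real.logb 2 (1 / q (z j)))]
          refine Finset.sum_congr rfl fun y _ => ?_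
          rw [Finset.sum_mul]
          refine Finset.sum_congr rfl fun z hz => ?_
          have : z j = y := (Finset.mem_filter.mp hz).2
          rw [this]
      _ = ∑ y : F, (∑ j : I,
            ∑ z ∈ Finset.univ.filter (fun z : I → F => z j = y), p z)
              * Real.logb 2 (1 / q y) := by
          rw [Finset.sum_comm]
          exact Finset.sum_congr rfl fun y _ => (Finset.sum_mul _ _ _).symm
      _ = ∑ y : F, ((N : ℝ) * q y) * Real.logb 2 (1 / q y) := by
          refine Finset.sum_congr rfl fun y _ => ?_
          congr 1
          have := hq y
          field_simp at this
          linarith [this]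
      _ = (N : ℝ) * H2 q := by
          rw [H2_eq_aux, Finset.mul_sum]
          exact Finset.sum_congr rfl fun y _ => by ring
  refine ⟨⟨hq0, hq1⟩, ?_⟩
  rw [ge_iff_le, div_le_iff₀ hNR]
  calc H2 p = ∑ z, p z * Real.logb 2 (1 / p z) := H2_eq_aux p
    _ ≤ ∑ z, p z * Real.logb 2 (1 / r z) := hgibbs
    _ = (N : ℝ) * H2 q := hcross
    _ = H2 q * (N : ℝ) := mul_comm _ _
end

section
/- Entropy of a random entry of a random matrix from a large set: let D, N, L be positive integers and c ≥ 0 a real number. Let S be a nonempty subset of the set of functions {1,…,D} × {1,…,N} → {0,1}^L (D×N matrices with entries in {0,1}^L) with |S| ≥ 2^{D·N·L − c}. Fix a row index ρ ∈ {1,…,D}. Let q be the pmf on {0,1}^L of the entry A(ρ, J) when A is drawn uniformly from S and J is drawn uniformly from {1,…,N} independently of A, i.e., q(y) = (1/N) · ∑_{j=1}^{N} |{A ∈ S : A(ρ, j) = y}| / |S|. Then the base-2 Shannon entropy of q satisfies H(q) ≥ L − c/N. (Entropy chain establishing Equation (eqn:entR) in the proof of Lemma 3.2.) -/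
open Finset

/-!
Draw `A` uniformly from `S`. Its entropy is `log₂ |S| ≥ DNL - c`. By subadditivity it is at most
the sum of the entropies of the `DN` entries, and each entry outside row `ρ` has entropy at most
`L`, so the entries `A (ρ, j)` have total entropy at least `NL - c`. The law `q` of `A (ρ, J)` is
the average of their laws, so by concavity of entropy `N · H(q)` is at least that total.
-/

open Real

section Entropy

variable {Ω : Type*} [Fintype Ω]

lemma H2_eq_sum_mul_logb_inv (p : Ω → ℝ) : H2 p = ∑ x, p x * logb 2 (1 / p x) := by
  unfold H2
  refine sum_congr rfl fun x _ => ?_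
  split_ifs with h <;> simp [h]

lemma H2_eq_sum_negMulLog (p : Ω → ℝ) : H2 p = ∑ x, negMulLog (p x) / log 2 := by
  rw [H2_eq_sum_mul_logb_inv]
  refine sum_congr rfl fun x _ => ?_
  rw [logb, one_div, log_inv, negMulLog]
  ring

lemma mul_logb_inv_sub_mul_logb_inv_le {a b : ℝ} (ha : 0 ≤ a) (hb : 0 ≤ b) (hab : a ≠ 0 → b ≠ 0) :
    a * logb 2 (1 / a) - a * logb 2 (1 / b) ≤ (b - a) / log 2 := by
  rcases ha.eq_or_lt with rfl | ha_pos
  · simpa using div_nonneg hb (log_nonneg one_le_two)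
  have hb_pos : 0 < b := hb.lt_of_ne (hab ha_pos.ne').symm
  have hlog : a * log (b / a) ≤ b - a := calc
    a * log (b / a) ≤ a * (b / a - 1) := by gcongr; exact log_le_sub_one_of_pos (by positivity)
    _ = b - a := by field_simp
  rw [← mul_sub, one_div, one_div, logb_inv, logb_inv, neg_sub_neg, ← logb_div hb_pos.ne' ha_pos.ne',
    logb, mul_div_assoc']
  gcongr

theorem H2_le_sum_mul_logb_inv {p w : Ω → ℝ} (hp : IsPMF p) (hw : ∀ x, 0 ≤ w x)
    (hw_sum : ∑ x, w x ≤ 1) (hpw : ∀ x, p x ≠ 0 → w x ≠ 0) :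
    H2 p ≤ ∑ x, p x * logb 2 (1 / w x) := by
  rw [H2_eq_sum_mul_logb_inv, ← sub_nonpos, ← sum_sub_distrib]
  calc ∑ x, (p x * logb 2 (1 / p x) - p x * logb 2 (1 / w x))
      ≤ ∑ x, (w x - p x) / log 2 :=
        sum_le_sum fun x _ => mul_logb_inv_sub_mul_logb_inv_le (hp.1 x) (hw x) (hpw x)
    _ = (∑ x, w x - 1) / log 2 := by rw [← sum_div, sum_sub_distrib, hp.2]
    _ ≤ 0 := div_nonpos_of_nonpos_of_nonneg (by linarith) (log_nonneg one_le_two)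

theorem H2_le_logb_card {p : Ω → ℝ} (hp : IsPMF p) : H2 p ≤ logb 2 (Fintype.card Ω) := by
  have hΩ : (0 : ℝ) < Fintype.card Ω := by
    rcases isEmpty_or_nonempty Ω with h | h
    · simpa using hp.2
    · exact_mod_cast Fintype.card_pos
  calc H2 p ≤ ∑ x, p x * logb 2 (1 / (1 / Fintype.card Ω)) :=
        H2_le_sum_mul_logb_inv hp (fun _ => by positivity) (by simp [hΩ.ne'])
          fun _ _ => by positivity
    _ = logb 2 (Fintype.card Ω) := by rw [← sum_mul, hp.2, one_div_one_div, one_mul]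

theorem sum_H2_le_card_mul_H2_avg {ι : Type*} [Fintype ι] [Nonempty ι] (p : ι → Ω → ℝ)
    (hp : ∀ i x, 0 ≤ p i x) :
    ∑ i, H2 (p i) ≤ Fintype.card ι * H2 (fun x => 1 / Fintype.card ι * ∑ i, p i x) := by
  have hι : (0 : ℝ) < Fintype.card ι := by exact_mod_cast Fintype.card_pos
  have jensen : ∀ x, ∑ i, negMulLog (p i x) ≤
      Fintype.card ι * negMulLog (1 / Fintype.card ι * ∑ i, p i x) := by
    intro x
    have := concaveOn_negMulLog.le_map_sum (t := univ) (w := fun _ => 1 / (Fintype.card ι : ℝ))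
      (p := fun i => p i x) (fun _ _ => by positivity) (by simp [hι.ne'])
      (fun i _ => Set.mem_Ici.2 (hp i x))
    simp only [smul_eq_mul, ← mul_sum] at this
    rwa [one_div, inv_mul_le_iff₀ hι, ← one_div] at this
  simp only [H2_eq_sum_negMulLog]
  rw [mul_sum, sum_comm]
  refine sum_le_sum fun x _ => ?_
  rw [← sum_div, ← mul_div_assoc]
  gcongr
  exact jensen x

end Entropy

section UniformPushforward

variable {α β : Type*} [DecidableEq β]

noncomputable def uniformPushforward (s : Finset α) (f : α → β) (b : β) : ℝ :=
  #{a ∈ s | f a = b} / #s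

variable {s : Finset α} {f : α → β}

lemma sum_uniformPushforward_mul (g : β → ℝ) [Fintype β] :
    ∑ b, uniformPushforward s f b * g b = (∑ a ∈ s, g (f a)) / #s := by
  rw [← sum_fiberwise' s f g, sum_div]
  refine sum_congr rfl fun b _ => ?_
  rw [uniformPushforward, sum_const, nsmul_eq_mul]
  ring

lemma isPMF_uniformPushforward [Fintype β] (hs : s.Nonempty) :
    IsPMF (uniformPushforward s f) := by
  refine ⟨fun b => by unfold uniformPushforward; positivity, ?_⟩
  simpa [hs.ne_empty] using sum_uniformPushforward_mul (s := s) (f := f) (fun _ => 1)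

lemma uniformPushforward_apply_pos {a : α} (ha : a ∈ s) : 0 < uniformPushforward s f (f a) := by
  have h_fiber : 0 < #{a' ∈ s | f a' = f a} := card_pos.2 ⟨a, mem_filter.2 ⟨ha, rfl⟩⟩
  have h_card : 0 < #s := card_pos.2 ⟨a, ha⟩
  unfold uniformPushforward
  positivity

lemma uniformPushforward_id_of_mem {a : α} [DecidableEq α] (ha : a ∈ s) :
    uniformPushforward s id a = 1 / #s := by
  simp [uniformPushforward, filter_eq', ha]

lemma H2_uniformPushforward_id [Fintype α] [DecidableEq α] (hs : s.Nonempty) :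
    H2 (uniformPushforward s id) = logb 2 #s := by
  rw [H2_eq_sum_mul_logb_inv, sum_uniformPushforward_mul,
    sum_congr rfl fun a ha => by rw [id, uniformPushforward_id_of_mem ha, one_div_one_div],
    sum_const, nsmul_eq_mul]
  field_simp [hs.card_pos.ne']

end UniformPushforward

/-- Gibbs' inequality against the product of the coordinate marginals. -/
theorem logb_card_le_sum_H2_uniformPushforward_eval {X Y : Type*} [Fintype X] [DecidableEq X]
    [Fintype Y] [DecidableEq Y] {s : Finset (X → Y)} (hs : s.Nonempty) :
    logb 2 #s ≤ ∑ x, H2 (uniformPushforward s (· x)) := by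
  set m : X → Y → ℝ := fun x => uniformPushforward s (· x)
  have hm_ne : ∀ A ∈ s, ∀ x, m x (A x) ≠ 0 := fun A hA x =>
    (uniformPushforward_apply_pos hA).ne'
  calc logb 2 #s = H2 (uniformPushforward s id) := (H2_uniformPushforward_id hs).symm
    _ ≤ ∑ A, uniformPushforward s id A * logb 2 (1 / ∏ x, m x (A x)) := by
      refine H2_le_sum_mul_logb_inv (isPMF_uniformPushforward hs)
        (fun A => prod_nonneg fun x _ => (isPMF_uniformPushforward hs).1 _) ?_ ?_
      · rw [← Fintype.prod_sum]
        exact (prod_eq_one fun x _ => (isPMF_uniformPushforward hs).2).le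
      · intro A hA
        have hA : A ∈ s := by
          by_contra h
          simp [uniformPushforward, filter_eq', h] at hA
        exact prod_ne_zero_iff.2 fun x _ => hm_ne A hA x
    _ = ∑ x, (∑ A ∈ s, logb 2 (1 / m x (A x))) / #s := by
      rw [sum_uniformPushforward_mul, ← sum_div, sum_comm]
      refine congrArg (· / _) (sum_congr rfl fun A hA => ?_)
      rw [id, one_div, logb_inv, logb_prod _ _ fun x _ => hm_ne A hA x, ← sum_neg_distrib]
      simp only [one_div, logb_inv]
    _ = ∑ x, H2 (m x) := by
      simp only [H2_eq_sum_mul_logb_inv, m, sum_uniformPushforward_mul]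

lemma sum_prod_le_sum_slice_add {ι κ : Type*} [Fintype ι] [Fintype κ] [DecidableEq ι]
    {f : ι × κ → ℝ} {B : ℝ} (hf : ∀ x, f x ≤ B) (i₀ : ι) :
    ∑ x, f x ≤ ∑ j, f (i₀, j) + (Fintype.card ι - 1) * Fintype.card κ * B := by
  rw [Fintype.sum_prod_type, ← add_sum_erase _ _ (mem_univ i₀)]
  gcongr
  calc ∑ i ∈ univ.erase i₀, ∑ j, f (i, j) ≤ ∑ i ∈ univ.erase i₀, ∑ j : κ, B :=
        sum_le_sum fun i _ => sum_le_sum fun j _ => hf (i, j)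
    _ = (Fintype.card ι - 1) * Fintype.card κ * B := by
      have : Nonempty ι := ⟨i₀⟩
      simp [card_erase_of_mem, Nat.cast_pred Fintype.card_pos, mul_assoc]

open scoped Classical in
theorem entropy_random_entry_general (D N L : ℕ) (hN : 0 < N) (c : ℝ)
    (S : Finset (Fin D × Fin N → (Fin L → Bool))) (hS : S.Nonempty)
    (hcard : (S.card : ℝ) ≥ (2 : ℝ) ^ (((D * N * L : ℕ) : ℝ) - c))
    (ρ : Fin D)
    (q : (Fin L → Bool) → ℝ)
    (hq : ∀ y, q y = (1 / (N : ℝ)) *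
      ∑ j : Fin N, ((S.filter fun A => A (ρ, j) = y).card : ℝ) / S.card) :
    H2 q ≥ (L : ℝ) - c / N := by
  have : NeZero N := ⟨hN.ne'⟩
  have hN' : (0 : ℝ) < N := by exact_mod_cast hN
  set m : Fin D × Fin N → (Fin L → Bool) → ℝ := fun x => uniformPushforward S (· x)
  have hq_avg : q = fun y => 1 / (N : ℝ) * ∑ j, m (ρ, j) y := funext hq
  have hlog_card : ((D * N * L : ℕ) : ℝ) - c ≤ logb 2 #S :=
    (le_logb_iff_rpow_le one_lt_two (by exact_mod_cast hS.card_pos)).2 hcard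
  have hentry : ∀ x, H2 (m x) ≤ L := fun x => by
    simpa [logb_pow] using H2_le_logb_card (isPMF_uniformPushforward (f := (· x)) hS)
  have hconcave : ∑ j, H2 (m (ρ, j)) ≤ N * H2 q := by
    simpa [hq_avg] using sum_H2_le_card_mul_H2_avg (fun j => m (ρ, j))
      fun j => (isPMF_uniformPushforward hS).1
  have hsub := (logb_card_le_sum_H2_uniformPushforward_eval hS).trans
    (sum_prod_le_sum_slice_add hentry ρ)
  simp only [Fintype.card_fin] at hsub
  push_cast at hlog_card
  rw [ge_iff_le, sub_le_iff_le_add, ← sub_le_iff_le_add', le_div_iff₀ hN']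
  linarith

open scoped Classical in
/-- Entropy of a random entry of a random matrix from a large set (entropy
chain establishing Equation (eqn:entR) in the proof of Lemma 3.2). -/
theorem entropy_random_entry (D N L : ℕ) (hD : 0 < D) (hN : 0 < N) (hL : 0 < L)
    (c : ℝ) (hc : 0 ≤ c)
    (S : Finset (Fin D × Fin N → (Fin L → Bool))) (hS : S.Nonempty)
    (hcard : (S.card : ℝ) ≥ (2 : ℝ) ^ (((D * N * L : ℕ) : ℝ) - c))
    (ρ : Fin D)
    (q : (Fin L → Bool) → ℝ)
    (hq : ∀ y, q y = (1 / (N : ℝ)) *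
      ∑ j : Fin N, ((S.filter fun A => A (ρ, j) = y).card : ℝ) / S.card) :
    H2 q ≥ (L : ℝ) - c / N :=
  entropy_random_entry_general D N L hN c S hS hcard ρ q hq
end
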